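/- arXiv:2601.02022 — 2 statements merged into one kernel-verified Lean document; each statement's English description precedes it below -/
import Mathlib

section
/- Let V be a d×d real symmetric positive definite matrix, u ∈ ℝᵈ, and p ∈ (0, 1]. Then ‖u‖_{V⁻¹}² ≤ ‖u‖₂^{2p/(p+1)} · ‖u‖_{V^{−1−p}}^{2/(p+1)}. -/
open Matrix

/-- The Mahalanobis norm `‖x‖_B = √(xᵀ B x)`. -/
noncomputable def mnorm {d : ℕ} (B : Matrix (Fin d) (Fin d) ℝ) (x : Fin d → ℝ) : ℝ :=
  Real.sqrt (x ⬝ᵥ B *ᵥ x)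

/-- Real matrix power of a symmetric matrix, via the spectral decomposition
(junk value `0` on non-Hermitian matrices). -/
noncomputable def mpow {d : ℕ} (A : Matrix (Fin d) (Fin d) ℝ) (q : ℝ) :
    Matrix (Fin d) (Fin d) ℝ :=
  if hA : A.IsHermitian then
    (hA.eigenvectorUnitary : Matrix (Fin d) (Fin d) ℝ) *
      Matrix.diagonal (fun i => hA.eigenvalues i ^ q) *
      star (hA.eigenvectorUnitary : Matrix (Fin d) (Fin d) ℝ)
  else 0

/-!
Diagonalise `V = U diag(λ) Uᵀ` and put `w = Uᵀ u`. Each of the three quadratic forms is then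
`∑ᵢ f(λᵢ) wᵢ²` with `f(x) = x⁻¹`, `1` and `x^(-1-p)` respectively, and the inequality is the
weighted Hölder inequality for the function `λ⁻¹` with weights `wᵢ²` and exponent `p + 1`.
-/

theorem Matrix.IsHermitian.dotProduct_cfc_mulVec {n : Type*} [Fintype n] [DecidableEq n]
    {A : Matrix n n ℝ} (hA : A.IsHermitian) (f : ℝ → ℝ) (u : n → ℝ) :
    u ⬝ᵥ cfc f A *ᵥ u =
      ∑ i, f (hA.eigenvalues i) * (star (hA.eigenvectorUnitary : Matrix n n ℝ) *ᵥ u) i ^ 2 := by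
  rw [hA.cfc_eq, IsHermitian.cfc, Unitary.conjStarAlgAut_apply, ← mulVec_mulVec, ← mulVec_mulVec,
    dotProduct_mulVec, ← mulVec_transpose]
  simp [star_eq_conjTranspose, mulVec_diagonal, dotProduct, sq, mul_left_comm]

theorem mpow_eq_cfc {d : ℕ} {A : Matrix (Fin d) (Fin d) ℝ} (hA : A.IsHermitian) (q : ℝ) :
    mpow A q = cfc (fun x : ℝ => x ^ q) A := by
  rw [mpow, dif_pos hA, hA.cfc_eq, IsHermitian.cfc, Unitary.conjStarAlgAut_apply]
  rfl

theorem sum_inv_mul_le_rpow_mul_rpow {ι : Type*} (s : Finset ι) {p : ℝ} (hp : 0 < p)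
    (a l : ι → ℝ) (ha : ∀ i, 0 ≤ a i) (hl : ∀ i, 0 ≤ l i) :
    ∑ i ∈ s, (l i)⁻¹ * a i ≤
      (∑ i ∈ s, a i) ^ (p / (p + 1)) * (∑ i ∈ s, l i ^ (-1 - p) * a i) ^ (p + 1)⁻¹ := by
  have holder := Real.inner_le_weight_mul_Lp_of_nonneg s (p := p + 1) (by linarith) a
    (fun i => (l i)⁻¹) ha (fun i => inv_nonneg.2 (hl i))
  have hexp : 1 - (p + 1)⁻¹ = p / (p + 1) := by field_simp; ring
  have hpow : ∀ i, (l i)⁻¹ ^ (p + 1) = l i ^ (-1 - p) := fun i => by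
    rw [Real.inv_rpow (hl i), ← Real.rpow_neg (hl i), neg_add', neg_sub_comm]
  simpa only [hexp, hpow, mul_comm (a _)] using holder

theorem holder_interpolation_general {d : ℕ} (V : Matrix (Fin d) (Fin d) ℝ) (hV : V.PosDef)
    (u : Fin d → ℝ) (p : ℝ) (hp0 : 0 < p) :
    mnorm V⁻¹ u ^ 2 ≤
      Real.sqrt (u ⬝ᵥ u) ^ (2 * p / (p + 1)) * mnorm (mpow V (-1 - p)) u ^ (2 / (p + 1)) := by
  have hH := hV.isHermitian
  set μ := hH.eigenvalues
  set w := star (hH.eigenvectorUnitary : Matrix (Fin d) (Fin d) ℝ) *ᵥ u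
  have hμ : ∀ i, 0 ≤ μ i := fun i => (hV.eigenvalues_pos i).le
  have hinv : u ⬝ᵥ V⁻¹ *ᵥ u = ∑ i, (μ i)⁻¹ * w i ^ 2 := by
    rw [nonsing_inv_eq_ringInverse, ← cfc_ringInverse_id (R := ℝ) V hV.isUnit hH.isSelfAdjoint,
      hH.dotProduct_cfc_mulVec]
  have hone : u ⬝ᵥ u = ∑ i, w i ^ 2 := by
    simpa only [cfc_const_one ℝ V hH.isSelfAdjoint, one_mulVec, one_mul] using
      hH.dotProduct_cfc_mulVec (fun _ => 1) u
  have hpow : u ⬝ᵥ mpow V (-1 - p) *ᵥ u = ∑ i, μ i ^ (-1 - p) * w i ^ 2 := by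
    rw [mpow_eq_cfc hH, hH.dotProduct_cfc_mulVec]
  have hsum_nonneg : ∀ f : ℝ → ℝ, (∀ x, 0 ≤ x → 0 ≤ f x) → 0 ≤ ∑ i, f (μ i) * w i ^ 2 :=
    fun f hf => Finset.sum_nonneg fun i _ => mul_nonneg (hf _ (hμ i)) (sq_nonneg _)
  rw [mnorm, mnorm, hinv, hone, hpow, Real.sq_sqrt (hsum_nonneg (·⁻¹) fun _ => inv_nonneg.2),
    ← Real.rpow_div_two_eq_sqrt _ (Finset.sum_nonneg fun i _ => sq_nonneg (w i)),
    ← Real.rpow_div_two_eq_sqrt _ (hsum_nonneg (· ^ (-1 - p)) fun x hx => Real.rpow_nonneg hx _)]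
  convert sum_inv_mul_le_rpow_mul_rpow Finset.univ hp0 (fun i => w i ^ 2) μ
    (fun i => sq_nonneg _) hμ using 3 <;> ring

/-- Hölder interpolation step in the proof of Lemma 3 of the paper. -/
theorem holder_interpolation {d : ℕ} (V : Matrix (Fin d) (Fin d) ℝ) (hV : V.PosDef)
    (u : Fin d → ℝ) (p : ℝ) (hp0 : 0 < p) (hp1 : p ≤ 1) :
    mnorm V⁻¹ u ^ 2 ≤
      Real.sqrt (u ⬝ᵥ u) ^ (2 * p / (p + 1)) * mnorm (mpow V (-1 - p)) u ^ (2 / (p + 1)) :=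
  holder_interpolation_general V hV u p hp0
end

section
/- Let λ ≥ 1, let u₀, u₁, …, u_{T−1} ∈ ℝᵈ satisfy ‖u_t‖₂ ≤ 1, and define V_t = λ I_d + ∑_{s=0}^{t−1} u_s u_sᵀ. Then ∑_{t=0}^{T−1} ‖u_t‖_{V_t⁻¹}² ≤ 2 log(det V_T / det V₀). -/
open Matrix

/-!
By the matrix determinant lemma, `det V_{t+1} = det V_t * (1 + ‖u_t‖²_{V_t⁻¹})`, so the right-hand
side telescopes into `∑ₜ 2 log (1 + ‖u_t‖²_{V_t⁻¹})`. Since `V_t ⪰ I`, we have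
`‖u_t‖²_{V_t⁻¹} ≤ ‖u_t‖² ≤ 1`, and `x ≤ 2 log (1 + x)` for `0 ≤ x ≤ 2`.
-/

theorem Real.le_two_mul_log_one_add {x : ℝ} (h0 : 0 ≤ x) (h2 : x ≤ 2) : x ≤ 2 * log (1 + x) := by
  have hlog := le_log_one_add_of_nonneg h0
  rw [div_le_iff₀ (by linarith)] at hlog
  nlinarith

namespace Matrix

variable {m : Type*}

theorem PosSemidef.posDef_of_sub_one [DecidableEq m] {B : Matrix m m ℝ}
    (hB : (B - 1).PosSemidef) : B.PosDef := by
  simpa using PosDef.one.add_posSemidef hB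

variable [Fintype m]

theorem posSemidef_vecMulVec_self (u : m → ℝ) : (vecMulVec u u).PosSemidef := by
  simpa using posSemidef_vecMulVec_self_star u

variable [DecidableEq m]

theorem det_add_vecMulVec {R : Type*} [CommRing R] {A : Matrix m m R} (hA : IsUnit A.det)
    (u v : m → R) : (A + vecMulVec u v).det = A.det * (1 + v ⬝ᵥ A⁻¹ *ᵥ u) := by
  rw [vecMulVec_eq Unit, det_add_replicateCol_mul_replicateRow hA, det_unique (1 + _),
    add_apply, one_apply_eq, ← replicateRow_vecMul, replicateRow_mul_replicateCol_apply,
    dotProduct_mulVec]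

theorem PosSemidef.dotProduct_le_of_sub_one {B : Matrix m m ℝ} (hB : (B - 1).PosSemidef)
    (x : m → ℝ) : x ⬝ᵥ x ≤ x ⬝ᵥ B *ᵥ x := by
  simpa [sub_mulVec, dotProduct_sub] using hB.dotProduct_mulVec_nonneg x

theorem dotProduct_inv_mulVec_le {B : Matrix m m ℝ} (hB : (B - 1).PosSemidef) (u : m → ℝ) :
    u ⬝ᵥ B⁻¹ *ᵥ u ≤ u ⬝ᵥ u := by
  -- `‖w‖² ≤ ⟪w, B w⟫ = ⟪u, w⟫` for `w = B⁻¹ u`, and `0 ≤ ‖u - w‖²` then gives `⟪u, w⟫ ≤ ‖u‖²`.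
  set w := B⁻¹ *ᵥ u
  have hBw : B *ᵥ w = u := by
    rw [mulVec_mulVec, mul_nonsing_inv _ hB.posDef_of_sub_one.det_pos.ne'.isUnit, one_mulVec]
  have hww : w ⬝ᵥ w ≤ u ⬝ᵥ w := by
    simpa [hBw, dotProduct_comm w u] using hB.dotProduct_le_of_sub_one w
  have hsq : 0 ≤ (u - w) ⬝ᵥ (u - w) := by simpa using dotProduct_star_self_nonneg (u - w)
  simp only [sub_dotProduct, dotProduct_sub, dotProduct_comm w u] at hsq
  linarith

theorem dotProduct_inv_mulVec_le_two_mul_log_det {B : Matrix m m ℝ} (hB : (B - 1).PosSemidef)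
    {u : m → ℝ} (hu : u ⬝ᵥ u ≤ 2) :
    u ⬝ᵥ B⁻¹ *ᵥ u ≤ 2 * (Real.log (B + vecMulVec u u).det - Real.log B.det) := by
  have hBpos := hB.posDef_of_sub_one
  have h0 : 0 ≤ u ⬝ᵥ B⁻¹ *ᵥ u := by
    simpa using hBpos.inv.posSemidef.dotProduct_mulVec_nonneg u
  rw [det_add_vecMulVec hBpos.det_pos.ne'.isUnit, Real.log_mul hBpos.det_pos.ne' (by positivity),
    add_sub_cancel_left]
  exact Real.le_two_mul_log_one_add h0 ((dotProduct_inv_mulVec_le hB u).trans hu)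

end Matrix

theorem sq_mnorm {d : ℕ} {B : Matrix (Fin d) (Fin d) ℝ} (hB : B.PosSemidef) (x : Fin d → ℝ) :
    mnorm B x ^ 2 = x ⬝ᵥ B *ᵥ x :=
  Real.sq_sqrt (by simpa using hB.dotProduct_mulVec_nonneg x)

/-- The standard elliptical potential lemma (Proposition 2 of Abeille and
Lazaric, 2017). -/
theorem elliptical_potential {d T : ℕ} (lam : ℝ) (hlam : 1 ≤ lam)
    (u : ℕ → Fin d → ℝ) (hu : ∀ t < T, Real.sqrt (u t ⬝ᵥ u t) ≤ 1)
    (V : ℕ → Matrix (Fin d) (Fin d) ℝ)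
    (hV : ∀ t, V t = lam • (1 : Matrix (Fin d) (Fin d) ℝ) +
      ∑ s ∈ Finset.range t, vecMulVec (u s) (u s)) :
    ∑ t ∈ Finset.range T, mnorm (V t)⁻¹ (u t) ^ 2 ≤
      2 * Real.log ((V T).det / (V 0).det) := by
  have hsucc (t : ℕ) : V (t + 1) = V t + vecMulVec (u t) (u t) := by
    rw [hV, hV, Finset.sum_range_succ, add_assoc]
  have hV_sub_one (t : ℕ) : (V t - 1).PosSemidef := by
    have : V t - 1 = (lam - 1) • 1 + ∑ s ∈ Finset.range t, vecMulVec (u s) (u s) := by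
      rw [hV, sub_smul, one_smul]; abel
    rw [this]
    exact (PosSemidef.one.smul (sub_nonneg.2 hlam)).add
      (posSemidef_sum _ fun s _ => posSemidef_vecMulVec_self (u s))
  have hdet (t : ℕ) : (V t).det ≠ 0 := (hV_sub_one t).posDef_of_sub_one.det_pos.ne'
  calc ∑ t ∈ Finset.range T, mnorm (V t)⁻¹ (u t) ^ 2
      ≤ ∑ t ∈ Finset.range T, 2 * (Real.log (V (t + 1)).det - Real.log (V t).det) := by
        refine Finset.sum_le_sum fun t ht => ?_
        rw [sq_mnorm (hV_sub_one t).posDef_of_sub_one.inv.posSemidef, hsucc]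
        have hut : u t ⬝ᵥ u t ≤ 1 := Real.sqrt_le_one.mp (hu t (Finset.mem_range.mp ht))
        exact dotProduct_inv_mulVec_le_two_mul_log_det (hV_sub_one t) (hut.trans one_le_two)
    _ = 2 * Real.log ((V T).det / (V 0).det) := by
        rw [← Finset.mul_sum, Finset.sum_range_sub (fun t => Real.log (V t).det),
          Real.log_div (hdet T) (hdet 0)]
end
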